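/- arXiv:1006.3464 — 3 statements merged into one kernel-verified Lean document; each statement's English description precedes it below -/
import Mathlib

section
/- For R = ℤ/2 and the involution * exchanging the two generators α, β of the free monoid A, the ring (ℤ[A], ⊙) with Banică's product x ⊙ y = Σ_{x=ag, y=g*b} ab is isomorphic as a ring to the free (non-commutative) unital ℤ-algebra on two generators, via a filtration-preserving isomorphism sending α and β to the generators. -/
/-- The anti-endomorphism `*` on words: `(r_1 … r_k)* = (σ r_k) … (σ r_1)`. -/
def starWord {R : Type*} (σ : R → R) (t : List R) : List R := (t.map σ).reverse

/-- Two words are linked, `t ∼ t'`, if `t* = t'` or `t'* = t`. -/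
def linked {R : Type*} (σ : R → R) (t t' : List R) : Prop :=
  starWord σ t = t' ∨ starWord σ t' = t

instance {R : Type*} [DecidableEq R] (σ : R → R) (t t' : List R) :
    Decidable (linked σ t t') :=
  inferInstanceAs (Decidable (_ ∨ _))

/-- Banică-type product of two words in `ℤ[A_R]`: the sum of `a b` over all
factorizations `r = a t`, `s = t' b` with `t ∼ t'`. -/
noncomputable def wordProd {R : Type*} [DecidableEq R] (σ : R → R) (r s : List R) :
    (List R →₀ ℤ) :=
  ∑ p ∈ Finset.range (r.length + 1) ×ˢ Finset.range (s.length + 1),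
    if linked σ (r.drop (r.length - p.1)) (s.take p.2)
    then Finsupp.single (r.take (r.length - p.1) ++ s.drop p.2) (1 : ℤ)
    else 0

/-- The bilinear extension `⊙` of the word product to the monoid ring `ℤ[A_R]`. -/
noncomputable def odot {R : Type*} [DecidableEq R] (σ : R → R) (x y : List R →₀ ℤ) :
    (List R →₀ ℤ) :=
  x.sum fun r cr => y.sum fun s cs => (cr * cs) • wordProd σ r s

/-!
Since `[a] ⊙ w = a w + [w starts with σ a] (tail w)`, the isomorphism onto the free algebra must
send a word to the element `E` given by `E [] = 1`, `E [a] = a` and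
`E (a b w) = a · E (b w) - [b = σ a] E w`. That `E` is multiplicative follows, by induction on the
left factor, from associativity of `⊙` when the left factor is a letter:
`[a] ⊙ (r ⊙ s) = (a r) ⊙ s + [r starts with σ a] (tail r) ⊙ s`.
The inverse sends the monomial `a₁ ⋯ aₙ` to `[a₁] ⊙ (⋯ ⊙ ([aₙ] ⊙ []))`. Neither map increases the
length of words, so `E` preserves the length filtration in both directions.
-/

open Finsupp

lemma List.take_succ_eq_append_singleton_iff {α : Type*} {s t : List α} {b : α} :
    s.take (t.length + 1) = t ++ [b] ↔ s.take t.length = t ∧ (s.drop t.length).head? = some b := by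
  rw [List.take_add_one, List.head?_drop]
  cases h : s[t.length]? with
  | none =>
    simp only [Option.toList_none, List.append_nil, reduceCtorEq, and_false, iff_false]
    intro heq
    have := congrArg List.length heq
    simp only [List.length_append, List.length_take, List.length_singleton] at this
    omega
  | some x =>
    have hlen : (s.take t.length).length = t.length := by
      simp only [List.length_take, inf_eq_left]
      exact (List.getElem?_eq_some_iff.mp h).1.le
    simp only [Option.toList_some, Option.some.injEq]
    constructor
    · intro heq
      obtain ⟨h1, h2⟩ := List.append_inj heq hlen
      exact ⟨h1, by simpa using h2⟩
    · rintro ⟨h1, rfl⟩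
      rw [h1]

lemma Finsupp.linearCombination_mem_of_mem_supported {α M S : Type*} [Semiring S]
    [AddCommMonoid M] [Module S M] {v : α → M} {s : Set α} {p : Submodule S M}
    (hv : ∀ a ∈ s, v a ∈ p) {l : α →₀ S} (hl : l ∈ supported S S s) :
    linearCombination S v l ∈ p :=
  Submodule.span_le.mpr (Set.image_subset_iff.mpr hv)
    (mem_span_image_iff_linearCombination S |>.mpr ⟨l, hl, rfl⟩)

section
variable {R : Type*} {σ : R → R}

lemma starWord_cons (a : R) (r : List R) :
    starWord σ (a :: r) = starWord σ r ++ [σ a] := by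
  simp [starWord]

lemma linked_iff_eq_starWord (hσ : Function.Involutive σ) {t t' : List R} :
    linked σ t t' ↔ t' = starWord σ t := by
  have hinv : starWord σ (starWord σ t') = t' := by
    simp [starWord, List.map_reverse, Function.comp_def, hσ _]
  refine ⟨fun h => h.elim Eq.symm fun h => ?_, fun h => Or.inl h.symm⟩
  rw [← h, hinv]

lemma linked.length_eq {t t' : List R} (h : linked σ t t') : t.length = t'.length := by
  rcases h with rfl | rfl <;> simp [starWord]

lemma MonoidAlgebra.of_mul_mem_supported_length_le {m : MonoidAlgebra ℤ (FreeMonoid R)} {n : ℕ}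
    (a : R) (hm : m ∈ MonoidAlgebra.supported ℤ ℤ {u : FreeMonoid R | u.length ≤ n}) :
    .of ℤ _ (.of a) * m ∈ MonoidAlgebra.supported ℤ ℤ {u : FreeMonoid R | u.length ≤ n + 1} := by
  classical
  intro u hu
  obtain ⟨v, hv, rfl⟩ :=
    Finset.mem_image.mp (MonoidAlgebra.support_coeff_single_mul_subset _ _ _ hu)
  simpa [FreeMonoid.length_mul, FreeMonoid.length_of, add_comm] using hm hv

variable [DecidableEq R]

lemma wordProd_eq_sum (hσ : Function.Involutive σ) (r s : List R) :
    wordProd σ r s = ∑ m ∈ Finset.range (r.length + 1),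
      if s.take m = starWord σ (r.drop (r.length - m))
      then single (r.take (r.length - m) ++ s.drop m) 1 else 0 := by
  rw [wordProd, Finset.sum_product]
  refine Finset.sum_congr rfl fun m hm => ?_
  have hlen : (r.drop (r.length - m)).length = m := by
    rw [List.length_drop]; rw [Finset.mem_range] at hm; omega
  have hlink : ∀ k, linked σ (r.drop (r.length - m)) (s.take k) → m = min k s.length :=
    fun k hl => by rw [← hlen, hl.length_eq, List.length_take]
  rw [Finset.sum_eq_single m]
  · simp only [linked_iff_eq_starWord hσ]
  · intro k hk hkm
    simp only [Finset.mem_range] at hk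
    exact if_neg fun hl => by have := hlink k hl; omega
  · intro hm'
    simp only [Finset.mem_range] at hm'
    exact if_neg fun hl => by have := hlink m hl; omega

lemma wordProd_nil (hσ : Function.Involutive σ) (s : List R) :
    wordProd σ [] s = single s 1 := by
  simp [wordProd_eq_sum hσ, starWord]

lemma wordProd_cons (hσ : Function.Involutive σ) (a : R) (r s : List R) :
    wordProd σ (a :: r) s = mapDomain (List.cons a) (wordProd σ r s) +
      if s.take (r.length + 1) = starWord σ (a :: r)
      then single (s.drop (r.length + 1)) 1 else 0 := by
  rw [wordProd_eq_sum hσ, wordProd_eq_sum hσ, List.length_cons, Finset.sum_range_succ,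
    ← mapDomain.addMonoidHom_apply, map_sum]
  congr 1
  · refine Finset.sum_congr rfl fun m hm => ?_
    rw [show r.length + 1 - m = r.length - m + 1 by rw [Finset.mem_range] at hm; omega,
      List.drop_succ_cons, List.take_succ_cons]
    split_ifs <;> simp [mapDomain_single]
  · simp

lemma wordProd_singleton (hσ : Function.Involutive σ) (a : R) (s : List R) :
    wordProd σ [a] s = single (a :: s) 1 +
      if s.head? = some (σ a) then single s.tail 1 else 0 := by
  rw [wordProd_cons hσ, wordProd_nil hσ, mapDomain_single]
  cases s <;> simp [starWord]

noncomputable def letterMul (σ : R → R) (a : R) : Module.End ℤ (List R →₀ ℤ) :=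
  linearCombination ℤ (wordProd σ [a])

lemma letterMul_mapDomain_cons (hσ : Function.Involutive σ) (a b : R) (x : List R →₀ ℤ) :
    letterMul σ a (mapDomain (List.cons b) x) =
      mapDomain (List.cons a) (mapDomain (List.cons b) x) + if b = σ a then x else 0 := by
  induction x using Finsupp.induction_linear with
  | zero => simp
  | add x y hx hy =>
    simp only [mapDomain_add, map_add, hx, hy]
    split_ifs <;> abel
  | single w c =>
    simp only [letterMul, mapDomain_single, linearCombination_single, wordProd_singleton hσ,
      List.head?_cons, Option.some.injEq, List.tail_cons]
    split_ifs <;> simp [smul_single]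

-- `[a] ⊙ (r ⊙ s) = ([a] ⊙ r) ⊙ s` for `r = b :: w`, where `[a] ⊙ r = a r + [b = σ a] w`.
lemma letterMul_wordProd_cons (hσ : Function.Involutive σ) (a b : R) (w s : List R) :
    letterMul σ a (wordProd σ (b :: w) s) =
      wordProd σ (a :: b :: w) s + if b = σ a then wordProd σ w s else 0 := by
  have hlen : (starWord σ (b :: w)).length = w.length + 1 := by simp [starWord]
  have hsplit := List.take_succ_eq_append_singleton_iff (s := s) (b := σ a)
    (t := starWord σ (b :: w))
  rw [hlen, ← starWord_cons] at hsplit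
  rw [wordProd_cons hσ a, wordProd_cons hσ b, map_add, letterMul_mapDomain_cons hσ,
    mapDomain_add, List.length_cons]
  by_cases hc : s.take (w.length + 1) = starWord σ (b :: w) <;>
  by_cases hd : (s.drop (w.length + 1)).head? = some (σ a) <;>
  simp [hsplit, hc, hd, letterMul, wordProd_singleton hσ, mapDomain_single, List.tail_drop] <;>
  abel

noncomputable def wordToFree (σ : R → R) : List R → MonoidAlgebra ℤ (FreeMonoid R)
  | [] => 1
  | [a] => .of ℤ _ (.of a)
  | a :: b :: w => .of ℤ _ (.of a) * wordToFree σ (b :: w) - if b = σ a then wordToFree σ w else 0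

noncomputable def toFree (σ : R → R) : (List R →₀ ℤ) →ₗ[ℤ] MonoidAlgebra ℤ (FreeMonoid R) :=
  linearCombination ℤ (wordToFree σ)

lemma toFree_single (w : List R) (c : ℤ) : toFree σ (single w c) = c • wordToFree σ w :=
  linearCombination_single _ _ _

lemma wordToFree_cons_add (a : R) (s : List R) :
    wordToFree σ (a :: s) + (if s.head? = some (σ a) then wordToFree σ s.tail else 0) =
      .of ℤ _ (.of a) * wordToFree σ s := by
  cases s <;> simp [wordToFree]

lemma toFree_letterMul (hσ : Function.Involutive σ) (a : R) (x : List R →₀ ℤ) :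
    toFree σ (letterMul σ a x) = .of ℤ _ (.of a) * toFree σ x := by
  induction x using Finsupp.induction_linear with
  | zero => simp
  | add x y hx hy => rw [map_add, map_add, hx, hy, map_add, mul_add]
  | single s c =>
    rw [letterMul, linearCombination_single, map_smul, wordProd_singleton hσ, map_add,
      apply_ite (toFree σ), toFree_single, toFree_single, map_zero, one_smul, one_smul,
      wordToFree_cons_add, toFree_single, mul_smul_comm]

lemma toFree_wordProd (hσ : Function.Involutive σ) (r s : List R) :
    toFree σ (wordProd σ r s) = wordToFree σ r * wordToFree σ s := by
  induction r using wordToFree.induct with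
  | case1 => simp [wordProd_nil hσ, toFree_single, wordToFree]
  | case2 a =>
    have : wordProd σ [a] s = letterMul σ a (single s 1) := by simp [letterMul]
    rw [this, toFree_letterMul hσ, toFree_single, one_smul, wordToFree]
  | case3 a b w ih ih' =>
    rw [eq_sub_of_add_eq (letterMul_wordProd_cons hσ a b w s).symm, map_sub,
      toFree_letterMul hσ, ih, apply_ite (toFree σ), ih', map_zero, wordToFree, sub_mul,
      mul_assoc, ite_mul, zero_mul]

lemma toFree_odot (hσ : Function.Involutive σ) (x y : List R →₀ ℤ) :
    toFree σ (odot σ x y) = toFree σ x * toFree σ y := by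
  simp only [odot, map_finsuppSum, map_smul, toFree_wordProd hσ]
  simp only [toFree, linearCombination_apply, Finsupp.sum_mul]
  simp only [Finsupp.mul_sum, smul_mul_smul_comm]

noncomputable def ofFree (σ : R → R) : MonoidAlgebra ℤ (FreeMonoid R) →ₗ[ℤ] (List R →₀ ℤ) :=
  LinearMap.applyₗ (single [] 1) ∘ₗ
    (MonoidAlgebra.lift ℤ (Module.End ℤ (List R →₀ ℤ)) (FreeMonoid R)
      (FreeMonoid.lift (letterMul σ))).toLinearMap

lemma ofFree_one : ofFree σ 1 = single [] 1 := by
  simp [ofFree]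

lemma ofFree_of_mul (a : R) (m : MonoidAlgebra ℤ (FreeMonoid R)) :
    ofFree σ (.of ℤ _ (.of a) * m) = letterMul σ a (ofFree σ m) := by
  simp [ofFree, Module.End.mul_apply]

lemma ofFree_wordToFree (hσ : Function.Involutive σ) (w : List R) :
    ofFree σ (wordToFree σ w) = single w 1 := by
  induction w using wordToFree.induct with
  | case1 => rw [wordToFree, ofFree_one]
  | case2 a =>
    rw [wordToFree, ← mul_one (MonoidAlgebra.of ℤ _ _), ofFree_of_mul, ofFree_one, letterMul,
      linearCombination_single, one_smul, wordProd_singleton hσ]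
    simp
  | case3 a b w ih ih' =>
    rw [wordToFree, map_sub, ofFree_of_mul, ih, apply_ite (ofFree σ), ih', map_zero, letterMul,
      linearCombination_single, one_smul, wordProd_singleton hσ]
    simp

lemma ofFree_toFree (hσ : Function.Involutive σ) (x : List R →₀ ℤ) :
    ofFree σ (toFree σ x) = x := by
  induction x using Finsupp.induction_linear with
  | zero => simp
  | add x y hx hy => rw [map_add, map_add, hx, hy]
  | single w c =>
    rw [toFree_single, map_smul, ofFree_wordToFree hσ, smul_single, smul_eq_mul, mul_one]

lemma toFree_ofFree (hσ : Function.Involutive σ) (m : MonoidAlgebra ℤ (FreeMonoid R)) :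
    toFree σ (ofFree σ m) = m := by
  induction m using MonoidAlgebra.induction_on with
  | of u =>
    induction u using FreeMonoid.inductionOn' with
    | one => rw [map_one, ofFree_one, toFree_single, one_smul, wordToFree]
    | of_mul a u ih => rw [map_mul, ofFree_of_mul, toFree_letterMul hσ, ih]
  | add x y hx hy => rw [map_add, map_add, hx, hy]
  | smul c x hx => rw [map_smul, map_smul, hx]

lemma wordToFree_mem_supported (w : List R) :
    wordToFree σ w ∈ MonoidAlgebra.supported ℤ ℤ {u : FreeMonoid R | u.length ≤ w.length} := by
  have hone : (1 : MonoidAlgebra ℤ (FreeMonoid R)) ∈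
      MonoidAlgebra.supported ℤ ℤ {u : FreeMonoid R | u.length ≤ 0} :=
    single_mem_supported ℤ (1 : ℤ) (FreeMonoid.length_one.le)
  induction w using wordToFree.induct with
  | case1 => exact hone
  | case2 a =>
    rw [wordToFree, ← mul_one (MonoidAlgebra.of ℤ _ _)]
    exact MonoidAlgebra.of_mul_mem_supported_length_le a hone
  | case3 a b w ih ih' =>
    refine sub_mem (MonoidAlgebra.of_mul_mem_supported_length_le a ih) ?_
    split_ifs
    · refine MonoidAlgebra.supported_mono (Set.ofPred_subset_ofPred.mpr fun _ hu => ?_) ih'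
      exact hu.trans (by simp only [List.length_cons]; omega)
    · exact zero_mem _

lemma toFree_mem_supported {x : List R →₀ ℤ} {n : ℕ}
    (hx : x ∈ supported ℤ ℤ {w : List R | w.length ≤ n}) :
    toFree σ x ∈ MonoidAlgebra.supported ℤ ℤ {u : FreeMonoid R | u.length ≤ n} :=
  linearCombination_mem_of_mem_supported (fun w hw => MonoidAlgebra.supported_mono
    (Set.ofPred_subset_ofPred.mpr fun _ hu => hu.trans hw) (wordToFree_mem_supported w)) hx

lemma letterMul_mem_supported (hσ : Function.Involutive σ) (a : R) {x : List R →₀ ℤ} {n : ℕ}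
    (hx : x ∈ supported ℤ ℤ {w : List R | w.length ≤ n}) :
    letterMul σ a x ∈ supported ℤ ℤ {w : List R | w.length ≤ n + 1} := by
  refine linearCombination_mem_of_mem_supported (fun s hs => ?_) hx
  rw [wordProd_singleton hσ]
  refine add_mem (single_mem_supported ℤ _ (Nat.succ_le_succ hs)) ?_
  split_ifs
  · refine single_mem_supported ℤ _ ?_
    simp only [Set.mem_ofPred_eq, List.length_tail] at hs ⊢
    omega
  · exact zero_mem _

lemma ofFree_mem_supported (hσ : Function.Involutive σ) {m : MonoidAlgebra ℤ (FreeMonoid R)}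
    {n : ℕ} (hm : m ∈ MonoidAlgebra.supported ℤ ℤ {u : FreeMonoid R | u.length ≤ n}) :
    ofFree σ m ∈ supported ℤ ℤ {w : List R | w.length ≤ n} := by
  have hof (u : FreeMonoid R) :
      ofFree σ (.of ℤ _ u) ∈ supported ℤ ℤ {w : List R | w.length ≤ u.length} := by
    induction u using FreeMonoid.inductionOn' with
    | one =>
      rw [map_one, ofFree_one]
      exact single_mem_supported ℤ _ (by simp)
    | of_mul a u ih =>
      rw [map_mul, ofFree_of_mul, FreeMonoid.length_mul, FreeMonoid.length_of, add_comm]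
      exact letterMul_mem_supported hσ a ih
  rw [MonoidAlgebra.supported_eq_span_single] at hm
  refine (Submodule.span_le (p := (supported ℤ ℤ _).comap (ofFree σ))).mpr ?_ hm
  rintro _ ⟨u, hu, rfl⟩
  exact supported_mono (Set.ofPred_subset_ofPred.mpr fun _ hw => hw.trans hu) (hof u)

lemma toFree_mem_supported_iff (hσ : Function.Involutive σ) (x : List R →₀ ℤ) (n : ℕ) :
    toFree σ x ∈ MonoidAlgebra.supported ℤ ℤ {u : FreeMonoid R | u.length ≤ n} ↔
      x ∈ supported ℤ ℤ {w : List R | w.length ≤ n} :=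
  ⟨fun h => ofFree_toFree hσ x ▸ ofFree_mem_supported hσ h, toFree_mem_supported⟩

noncomputable def toFreeEquiv (hσ : Function.Involutive σ) :
    (List R →₀ ℤ) ≃ₗ[ℤ] MonoidAlgebra ℤ (FreeMonoid R) :=
  .ofLinearMap (toFree σ) (ofFree σ) (LinearMap.ext (toFree_ofFree hσ))
    (LinearMap.ext (ofFree_toFree hσ))

end

/-- For `R = ℤ/2` (the involution `*` exchanging the two generators),
the ring `(ℤ[A], ⊙)` with Banică's product is isomorphic to the free unital
`ℤ`-algebra on two generators (the monoid ring of the free monoid on two generators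
with concatenation), via a filtration-preserving isomorphism sending the two
generators to the generators. -/
theorem banica_ring_free (σ : ZMod 2 → ZMod 2) (hσ : σ = fun r => r + 1) :
    ∃ e : (List (ZMod 2) →₀ ℤ) ≃+ MonoidAlgebra ℤ (FreeMonoid (ZMod 2)),
      (∀ x y, e (odot σ x y) = e x * e y) ∧
      e (Finsupp.single ([] : List (ZMod 2)) (1 : ℤ)) = 1 ∧
      e (Finsupp.single [(0 : ZMod 2)] (1 : ℤ)) =
        MonoidAlgebra.of ℤ (FreeMonoid (ZMod 2)) (FreeMonoid.of 0) ∧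
      e (Finsupp.single [(1 : ZMod 2)] (1 : ℤ)) =
        MonoidAlgebra.of ℤ (FreeMonoid (ZMod 2)) (FreeMonoid.of 1) ∧
      (∀ (x : List (ZMod 2) →₀ ℤ) (n : ℕ),
        (∀ w ∈ x.support, w.length ≤ n) ↔
        (∀ w ∈ (e x).coeff.support, (FreeMonoid.toList w).length ≤ n)) := by
  have hinv : Function.Involutive σ := by subst hσ; intro r; fin_cases r <;> rfl
  refine ⟨(toFreeEquiv hinv).toAddEquiv, toFree_odot hinv, ?_, ?_, ?_,
    fun x n => (toFree_mem_supported_iff hinv x n).symm⟩ <;>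
  exact (toFree_single _ _).trans (one_smul _ _)
end

section
/- With n ≥ 2 and a vector r = (r_1,…,r_k) of integers, define an r-configuration to be an assignment of symbols from {empty, '(', ')'} to positions 1,…,k such that: the parenthesis symbols form a balanced (grammatically correct) parenthesization; if a '(' at position i is matched with ')' at position j > i then r_j = r_i ± 1, and every position strictly between i and j carries a (matched) parenthesis. For a configuration c, let r_c be the vector obtained from r by deleting the parenthesized positions. Then the counting identity n^k = Σ_{c ∈ Conf_r} n_{r_c} holds, where n_s is the number of admissible sequences for s. -/
/-- The admissibility constraint of the vector `r` at the adjacent pair of positions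
`(i, i+1)`: if `r_{i+1} = r_i ± 1` then `(n_i, n_{i+1}) ≠ (n, n)` when `r_i` is even, and
`(n_i, n_{i+1}) ≠ (1, 1)` when `r_i` is odd (values in `Fin n` encode `{1, …, n}` via
`v ↦ v + 1`). -/
def admissibleAt (n : ℕ) {k : ℕ} (r : Fin k → ℤ) (ns : Fin k → Fin n)
    (i : ℕ) (h : i + 1 < k) : Prop :=
  (r ⟨i + 1, h⟩ = r ⟨i, Nat.lt_of_succ_lt h⟩ + 1 ∨
   r ⟨i + 1, h⟩ = r ⟨i, Nat.lt_of_succ_lt h⟩ - 1) →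
  ((Even (r ⟨i, Nat.lt_of_succ_lt h⟩) →
      ¬((ns ⟨i, Nat.lt_of_succ_lt h⟩ : ℕ) + 1 = n ∧ (ns ⟨i + 1, h⟩ : ℕ) + 1 = n)) ∧
   (Odd (r ⟨i, Nat.lt_of_succ_lt h⟩) →
      ¬((ns ⟨i, Nat.lt_of_succ_lt h⟩ : ℕ) = 0 ∧ (ns ⟨i + 1, h⟩ : ℕ) = 0)))

/-- A sequence `ns ∈ {1, …, n}^k` is admissible for `r` if the admissibility constraint
holds at every adjacent pair of positions. -/
def admissible (n : ℕ) {k : ℕ} (r : Fin k → ℤ) (ns : Fin k → Fin n) : Prop :=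
  ∀ (i : ℕ) (h : i + 1 < k), admissibleAt n r ns i h

/-- `n_r`: the number of admissible sequences for `r`. -/
noncomputable def nCount (n : ℕ) {k : ℕ} (r : Fin k → ℤ) : ℕ :=
  Nat.card {ns : Fin k → Fin n // admissible n r ns}

/-- An `r`-configuration, encoded by its partial matching `M` of positions: matched pairs
are the parenthesis pairs (`'('` at the smaller position, `')'` at the larger one), and
`M i = none` means position `i` carries the empty symbol. The conditions say: the
matching is symmetric and irreflexive; matched pairs are non-crossing (so the
parenthesization is grammatically correct); a matched pair `(i, j)` requires
`r_j = r_i ± 1`; and all positions strictly between a matched pair are themselves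
parenthesized. -/
def IsConfig {k : ℕ} (r : Fin k → ℤ) (M : Fin k → Option (Fin k)) : Prop :=
  (∀ i j, M i = some j → M j = some i) ∧
  (∀ i, M i ≠ some i) ∧
  (∀ i j l m, M i = some j → M l = some m → i < l → l < j → i < m ∧ m < j) ∧
  (∀ i j, M i = some j → r j = r i + 1 ∨ r j = r i - 1) ∧
  (∀ i j, M i = some j → ∀ l, i < l → l < j → (M l).isSome)

/-- The type of `r`-configurations. -/
abbrev Config {k : ℕ} (r : Fin k → ℤ) := {M : Fin k → Option (Fin k) // IsConfig r M}

/-- The set of unparenthesized (empty-symbol) positions of a configuration. -/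
def freePos {k : ℕ} {r : Fin k → ℤ} (c : Config r) : Finset (Fin k) :=
  Finset.univ.filter fun i => c.1 i = none

/-- The length of the reduced vector `r_c`. -/
def reducedLen {k : ℕ} {r : Fin k → ℤ} (c : Config r) : ℕ := (freePos c).card

/-- The reduced vector `r_c`: `r` with the parenthesized positions deleted. -/
def reducedVec {k : ℕ} {r : Fin k → ℤ} (c : Config r) : Fin (reducedLen c) → ℤ :=
  fun t => r ((freePos c).orderIsoOfFin rfl t).1

/-!
Call a configuration `c` compatible with `ns ∈ {1, …, n}^k` if every arc `(i, j)` of `c` is a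
violation of `ns` (`r_j = r_i ± 1` and both `ns_i`, `ns_j` take the value forbidden by `r_i`) while
no two consecutive free positions of `c` form a violation. Every `ns` is compatible with exactly
one configuration. By induction on `k`: if `ns` is admissible, only the empty configuration
works, since an innermost arc would be an adjacent violation; otherwise take an adjacent violation
`(i, i + 1)`. Because `r_i` and `r_{i+1}` have different parities, their forbidden values differ,
and this forces every compatible configuration to have the arc `(i, i + 1)`. Deleting those two
positions reduces to `k - 2`. For fixed `c`, a compatible `ns` is determined by its restriction to
the free positions, which ranges over the admissible sequences for `r_c`. Summing over `c` gives
`n^k = Σ_c n_{r_c}`.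
-/

/-- The value forbidden at both ends of a step leaving `x` (`n` for even `x`, `1` for odd `x`),
in the 0-based encoding `Fin n` of `{1, …, n}`. -/
def badValue (n : ℕ) (x : ℤ) : ℕ := if Even x then n - 1 else 0

theorem badValue_lt {n : ℕ} (hn : 0 < n) (x : ℤ) : badValue n x < n := by
  unfold badValue; split <;> omega

theorem badValue_ne {n : ℕ} (hn : 2 ≤ n) {x y : ℤ} (h : y = x + 1 ∨ y = x - 1) :
    badValue n x ≠ badValue n y := by
  have hparity : Even y ↔ ¬Even x := by
    rcases h with rfl | rfl
    · exact Int.even_add_one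
    · exact Int.even_sub_one
  unfold badValue
  split_ifs <;> simp_all <;> omega

section Admissibility

variable {ι κ : Type*} {n : ℕ}

def IsViolation (n : ℕ) (r : ι → ℤ) (ns : ι → Fin n) (p q : ι) : Prop :=
  (r q = r p + 1 ∨ r q = r p - 1) ∧
    (ns p : ℕ) = badValue n (r p) ∧ (ns q : ℕ) = badValue n (r p)

def AdmissibleOn [Preorder ι] (n : ℕ) (r : ι → ℤ) (S : Set ι) (ns : ι → Fin n) : Prop :=
  ∀ p ∈ S, ∀ q ∈ S, p < q → (∀ s ∈ S, s ∉ Set.Ioo p q) → ¬IsViolation n r ns p q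

theorem admissibleOn_image_iff [Preorder ι] [Preorder κ] (d : κ ↪o ι) (r : ι → ℤ) (S : Set κ)
    (ns : ι → Fin n) :
    AdmissibleOn n r (d '' S) ns ↔ AdmissibleOn n (r ∘ d) S (ns ∘ d) := by
  simp only [AdmissibleOn, Set.forall_mem_image, Set.mem_Ioo, d.lt_iff_lt]
  rfl

theorem admissibleAt_iff {k : ℕ} (r : Fin k → ℤ) (ns : Fin k → Fin n) (i : ℕ)
    (h : i + 1 < k) :
    admissibleAt n r ns i h ↔ ¬IsViolation n r ns ⟨i, by omega⟩ ⟨i + 1, h⟩ := by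
  have hpred (x : Fin n) : (x : ℕ) + 1 = n ↔ (x : ℕ) = n - 1 := by omega
  unfold admissibleAt IsViolation badValue
  rcases Int.even_or_odd (r ⟨i, by omega⟩) with he | ho
  · simp only [he, (Int.not_odd_iff_even).2 he, hpred, if_true, true_implies, false_implies,
      and_true]
    tauto
  · simp only [ho, (Int.not_even_iff_odd).2 ho, if_false, true_implies, false_implies,
      true_and]
    tauto

theorem admissible_iff_admissibleOn_univ {k : ℕ} (r : Fin k → ℤ) (ns : Fin k → Fin n) :
    admissible n r ns ↔ AdmissibleOn n r Set.univ ns := by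
  simp only [admissible, admissibleAt_iff, AdmissibleOn, Set.mem_univ, Set.mem_Ioo, true_implies]
  constructor
  · intro h p q hpq hgap
    have hq : (q : ℕ) = p + 1 := by
      by_contra hne
      exact hgap ⟨p + 1, by omega⟩ ⟨Fin.lt_def.2 (by simp), Fin.lt_def.2 (by simp; omega)⟩
    have hp : (p : ℕ) + 1 < k := hq ▸ q.isLt
    obtain rfl : q = ⟨p + 1, hp⟩ := Fin.ext hq
    exact h p hp
  · intro h i hi
    exact h _ _ (Fin.lt_def.2 (by simp)) fun s hs => by simp [Fin.lt_def] at hs; omega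

end Admissibility

theorem Nat.card_eq_sum_card_of_existsUnique {α β : Type*} [Finite α] [Fintype β]
    (R : β → α → Prop) (h : ∀ a, ∃! b, R b a) : Nat.card α = ∑ b, Nat.card {a // R b a} := by
  choose f hf huniq using h
  rw [← Nat.card_congr (Equiv.sigmaFiberEquiv f), Nat.card_sigma]
  refine Finset.sum_congr rfl fun b _ => Nat.card_congr (Equiv.subtypeEquivRight fun a => ?_)
  exact ⟨fun hb => hb ▸ hf a, fun hb => (huniq a b hb).symm⟩

namespace Config

variable {n k : ℕ} {r : Fin k → ℤ} (c : Config r) {i j l : Fin k}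

theorem symm (h : c.1 i = some j) : c.1 j = some i := c.2.1 i j h

theorem ne (h : c.1 i = some j) : i ≠ j := fun e => c.2.2.1 i (e ▸ h)

theorem step (h : c.1 i = some j) : r j = r i + 1 ∨ r j = r i - 1 := c.2.2.2.2.1 i j h

theorem exists_nested (h : c.1 i = some j) (hil : i < l) (hlj : l < j) :
    ∃ l', c.1 l = some l' ∧ i < l' ∧ l' < j := by
  obtain ⟨l', hl'⟩ := Option.isSome_iff_exists.1 (c.2.2.2.2.2 i j h l hil hlj)
  exact ⟨l', hl', c.2.2.2.1 i j l l' h hl' hil hlj⟩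

theorem mem_freePos : i ∈ freePos c ↔ c.1 i = none := by
  simp [freePos]

def IsCompatible (c : Config r) (ns : Fin k → Fin n) : Prop :=
  (∀ i j, c.1 i = some j → i < j → IsViolation n r ns i j) ∧
    AdmissibleOn n r (freePos c) ns

def freePosEmb : Fin (reducedLen c) ↪o Fin k := (freePos c).orderEmbOfFin rfl

theorem range_freePosEmb : Set.range c.freePosEmb = freePos c :=
  Finset.range_orderEmbOfFin _ _

theorem admissibleOn_freePos_iff (ns : Fin k → Fin n) :
    AdmissibleOn n r (freePos c) ns ↔ admissible n (reducedVec c) (ns ∘ c.freePosEmb) := by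
  have hvec : reducedVec c = r ∘ c.freePosEmb :=
    funext fun t => congrArg r (Finset.coe_orderIsoOfFin_apply _ _ _)
  rw [hvec, admissible_iff_admissibleOn_univ, ← admissibleOn_image_iff, Set.image_univ,
    range_freePosEmb]

theorem forall_arc_isViolation_iff (ns : Fin k → Fin n) :
    (∀ i j, c.1 i = some j → i < j → IsViolation n r ns i j) ↔
      ∀ i j, c.1 i = some j → (ns i : ℕ) = badValue n (r (min i j)) := by
  constructor
  · intro h i j hij
    rcases (c.ne hij).lt_or_gt with hlt | hgt
    · rw [min_eq_left hlt.le]; exact (h i j hij hlt).2.1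
    · rw [min_eq_right hgt.le]; exact (h j i (c.symm hij) hgt).2.2
  · intro h i j hij hlt
    refine ⟨c.step hij, ?_, ?_⟩
    · rw [h i j hij, min_eq_left hlt.le]
    · rw [h j i (c.symm hij), min_eq_right hlt.le]

theorem isCompatible_iff (ns : Fin k → Fin n) :
    c.IsCompatible ns ↔ (∀ i j, c.1 i = some j → (ns i : ℕ) = badValue n (r (min i j))) ∧
      admissible n (reducedVec c) (ns ∘ c.freePosEmb) := by
  rw [IsCompatible, forall_arc_isViolation_iff, admissibleOn_freePos_iff]

theorem not_mem_range_freePosEmb {i j : Fin k} (h : c.1 i = some j) :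
    ¬∃ u, c.freePosEmb u = i := by
  rw [← Set.mem_range, range_freePosEmb, Finset.mem_coe, mem_freePos, h]
  exact Option.some_ne_none j

def arcFill (hn : 0 < n) (i : Fin k) : Fin n :=
  ⟨badValue n (r (min i ((c.1 i).getD i))), badValue_lt hn _⟩

theorem arcFill_of_arc (hn : 0 < n) {i j : Fin k} (h : c.1 i = some j) :
    (c.arcFill hn i : ℕ) = badValue n (r (min i j)) := by
  simp [arcFill, h]

noncomputable def isCompatibleEquiv (hn : 0 < n) :
    {ns : Fin k → Fin n // c.IsCompatible ns} ≃ {a // admissible n (reducedVec c) a} where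
  toFun ns := ⟨ns.1 ∘ c.freePosEmb, ((c.isCompatible_iff _).1 ns.2).2⟩
  invFun a := ⟨Function.extend c.freePosEmb a.1 (c.arcFill hn), (c.isCompatible_iff _).2
    ⟨fun i j h => by
      rw [Function.extend_apply' _ _ _ (c.not_mem_range_freePosEmb h), c.arcFill_of_arc hn h],
     by rw [Function.extend_comp c.freePosEmb.injective]; exact a.2⟩⟩
  left_inv ns := by
    refine Subtype.ext (funext fun i => ?_)
    dsimp only
    cases h : c.1 i with
    | none =>
      obtain ⟨u, rfl⟩ : i ∈ Set.range c.freePosEmb := by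
        rw [range_freePosEmb, Finset.mem_coe, mem_freePos, h]
      exact c.freePosEmb.injective.extend_apply _ _ u
    | some j =>
      rw [Function.extend_apply' _ _ _ (c.not_mem_range_freePosEmb h)]
      exact Fin.ext ((c.arcFill_of_arc hn h).trans (((c.isCompatible_iff _).1 ns.2).1 i j h).symm)
  right_inv a := Subtype.ext (Function.extend_comp c.freePosEmb.injective _ _)

theorem card_isCompatible (hn : 0 < n) :
    Nat.card {ns : Fin k → Fin n // c.IsCompatible ns} = nCount n (reducedVec c) :=
  Nat.card_congr (c.isCompatibleEquiv hn)

theorem exists_adjacent_arc (h : c.1 i = some j) :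
    ∃ p q : Fin k, (q : ℕ) = p + 1 ∧ c.1 p = some q := by
  classical
  let arcs := Finset.univ.filter fun x : Fin k × Fin k => c.1 x.1 = some x.2 ∧ x.1 < x.2
  have hne : arcs.Nonempty := by
    rcases (c.ne h).lt_or_gt with hij | hji
    · exact ⟨(i, j), by simp [arcs, h, hij]⟩
    · exact ⟨(j, i), by simp [arcs, c.symm h, hji]⟩
  -- An arc of minimal length is adjacent: otherwise the position just after its left end would
  -- open a shorter arc inside it.
  obtain ⟨⟨p, q⟩, hpq, hmin⟩ := arcs.exists_min_image (fun x => (x.2 : ℕ) - x.1) hne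
  simp only [arcs, Finset.mem_filter, Finset.mem_univ, true_and] at hpq hmin
  refine ⟨p, q, ?_, hpq.1⟩
  by_contra hgap
  have hpq' := Fin.lt_def.1 hpq.2
  obtain ⟨l', hl', hpl', hl'q⟩ := c.exists_nested hpq.1 (l := ⟨p + 1, by omega⟩)
    (Fin.lt_def.2 (by simp)) (Fin.lt_def.2 (by simp only; omega))
  have hl'ne := Fin.val_ne_of_ne (c.ne hl')
  rw [Fin.lt_def] at hpl' hl'q
  simp only at hl'ne hpl'
  have := hmin (⟨p + 1, by omega⟩, l') ⟨hl', Fin.lt_def.2 (by simp only; omega)⟩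
  simp only at this
  omega

variable {c} in
theorem IsCompatible.arc_of_isViolation (hn : 2 ≤ n) {ns : Fin k → Fin n}
    (hc : c.IsCompatible ns) {p q : Fin k} (hpq : (q : ℕ) = p + 1)
    (hv : IsViolation n r ns p q) : c.1 p = some q := by
  obtain ⟨hstep, hp, hq⟩ := hv
  have hlt : p < q := Fin.lt_def.2 (by omega)
  have q_not_opening : ∀ l, c.1 q = some l → q < l → False := fun l hl hql =>
    badValue_ne hn hstep (hq.symm.trans (hc.1 q l hl hql).2.1)
  have p_not_closing : ∀ j, c.1 p = some j → j < p → False := fun j hj hjp =>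
    badValue_ne hn (c.step (c.symm hj)) ((hc.1 j p (c.symm hj) hjp).2.2.symm.trans hp)
  cases hcp : c.1 p with
  | some j =>
    rcases lt_trichotomy j p with hjp | rfl | hpj
    · exact (p_not_closing j hcp hjp).elim
    · exact (c.ne hcp rfl).elim
    · by_contra hjq
      have hqj : q < j := by
        rw [Fin.lt_def] at hpj ⊢
        have : (j : ℕ) ≠ q := fun h => hjq (congrArg some (Fin.ext h))
        omega
      obtain ⟨l, hl, hpl, -⟩ := c.exists_nested hcp hlt hqj
      refine q_not_opening l hl (Fin.lt_def.2 ?_)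
      have := Fin.val_ne_of_ne (c.ne hl)
      rw [Fin.lt_def] at hpl
      omega
  | none =>
    cases hcq : c.1 q with
    | none =>
      refine (hc.2 p ((c.mem_freePos).2 hcp) q ((c.mem_freePos).2 hcq) hlt
        (fun s _ hs => ?_) ⟨hstep, hp, hq⟩).elim
      rw [Set.mem_Ioo, Fin.lt_def, Fin.lt_def] at hs
      omega
    | some l =>
      rcases lt_trichotomy l q with hlq | rfl | hql
      · have hlp : l < p := by
          have : l ≠ p := by rintro rfl; simp [c.symm hcq] at hcp
          rw [Fin.lt_def] at hlq ⊢
          have := Fin.val_ne_of_ne this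
          omega
        obtain ⟨_, hp', -⟩ := c.exists_nested (c.symm hcq) hlp hlt
        simp [hcp] at hp'
      · exact (c.ne hcq rfl).elim
      · exact (q_not_opening l hcq hql).elim

def empty (r : Fin k → ℤ) : Config r :=
  ⟨fun _ => none, by simp [IsConfig]⟩

theorem freePos_empty : freePos (empty r) = Finset.univ := by
  ext; simp [freePos, empty]

theorem empty_isCompatible_iff {ns : Fin k → Fin n} :
    (empty r).IsCompatible ns ↔ admissible n r ns := by
  rw [IsCompatible, freePos_empty, Finset.coe_univ, admissible_iff_admissibleOn_univ]
  simp [empty]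

theorem eq_empty_of_isCompatible {ns : Fin k → Fin n} (hadm : admissible n r ns)
    (hc : c.IsCompatible ns) : c = empty r := by
  refine Subtype.ext (funext fun i => ?_)
  by_contra h
  obtain ⟨j, hj⟩ := Option.ne_none_iff_exists'.1 h
  obtain ⟨p, q, hpq, harc⟩ := c.exists_adjacent_arc hj
  have hlt : p < q := Fin.lt_def.2 (by omega)
  refine (admissible_iff_admissibleOn_univ r ns).1 hadm p trivial q trivial hlt
    (fun s _ hs => ?_) (hc.1 p q harc hlt)
  rw [Set.mem_Ioo, Fin.lt_def, Fin.lt_def] at hs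
  omega

theorem existsUnique_isCompatible_of_admissible {ns : Fin k → Fin n}
    (hadm : admissible n r ns) : ∃! c : Config r, c.IsCompatible ns :=
  ⟨empty r, empty_isCompatible_iff.2 hadm, fun c hc => c.eq_empty_of_isCompatible hadm hc⟩

end Config

section OmitPair

variable {m : ℕ}

def omitPair (i : Fin (m + 1)) : Fin m ↪o Fin (m + 2) :=
  OrderEmbedding.ofStrictMono
    (fun t => if (t : ℕ) < i then ⟨t, by omega⟩ else ⟨t + 2, by omega⟩)
    (by
      intro a b h
      rw [Fin.lt_def] at h
      dsimp only
      split_ifs <;> simp only [Fin.mk_lt_mk] <;> omega)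

theorem val_omitPair (i : Fin (m + 1)) (t : Fin m) :
    (omitPair i t : ℕ) = if (t : ℕ) < i then (t : ℕ) else (t : ℕ) + 2 := by
  change ((if (t : ℕ) < i then _ else _ : Fin (m + 2)) : ℕ) = _
  split_ifs <;> rfl

theorem omitPair_cases (i : Fin (m + 1)) (j : Fin (m + 2)) :
    j = i.castSucc ∨ j = i.succ ∨ ∃ t, omitPair i t = j := by
  rcases lt_trichotomy (j : ℕ) i with h | h | h
  · exact Or.inr <| Or.inr ⟨⟨j, by omega⟩, Fin.ext (by simp [val_omitPair, h])⟩
  · exact Or.inl (Fin.ext h)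
  · by_cases h' : (j : ℕ) = i + 1
    · exact Or.inr <| Or.inl (Fin.ext h')
    · refine Or.inr <| Or.inr ⟨⟨j - 2, by omega⟩, Fin.ext ?_⟩
      rw [val_omitPair]
      split_ifs <;> simp only at * <;> omega

theorem val_omitPair_lt_or_gt (i : Fin (m + 1)) (t : Fin m) :
    (omitPair i t : ℕ) < i ∨ (i : ℕ) + 1 < omitPair i t := by
  rw [val_omitPair]; split_ifs <;> omega

theorem omitPair_ne_castSucc (i : Fin (m + 1)) (t : Fin m) : omitPair i t ≠ i.castSucc := by
  rw [Ne, Fin.ext_iff, val_omitPair]; split_ifs <;> simp <;> omega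

theorem omitPair_ne_succ (i : Fin (m + 1)) (t : Fin m) : omitPair i t ≠ i.succ := by
  rw [Ne, Fin.ext_iff, val_omitPair]; split_ifs <;> simp <;> omega

end OmitPair

section ArcSurgery

variable {m : ℕ} (i : Fin (m + 1))

noncomputable def insertArcFun (M : Fin m → Option (Fin m)) (j : Fin (m + 2)) :
    Option (Fin (m + 2)) :=
  if j = i.castSucc then some i.succ
  else if j = i.succ then some i.castSucc
  else (Function.partialInv (omitPair i) j).bind fun t => (M t).map (omitPair i)

noncomputable def eraseArcFun (M : Fin (m + 2) → Option (Fin (m + 2))) (t : Fin m) :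
    Option (Fin m) :=
  (M (omitPair i t)).bind (Function.partialInv (omitPair i))

variable {i} (M : Fin m → Option (Fin m))

theorem insertArcFun_castSucc : insertArcFun i M i.castSucc = some i.succ := if_pos rfl

theorem insertArcFun_succ : insertArcFun i M i.succ = some i.castSucc := by
  rw [insertArcFun, if_neg (Fin.castSucc_lt_succ).ne', if_pos rfl]

theorem insertArcFun_omitPair (t : Fin m) :
    insertArcFun i M (omitPair i t) = (M t).map (omitPair i) := by
  rw [insertArcFun, if_neg (omitPair_ne_castSucc i t), if_neg (omitPair_ne_succ i t),
    Function.partialInv_left (omitPair i).injective, Option.bind_some]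

theorem insertArcFun_eq_some_iff {j l : Fin (m + 2)} :
    insertArcFun i M j = some l ↔
      (j = i.castSucc ∧ l = i.succ) ∨ (j = i.succ ∧ l = i.castSucc) ∨
        ∃ t t', M t = some t' ∧ omitPair i t = j ∧ omitPair i t' = l := by
  have h₁ := omitPair_ne_castSucc i
  have h₂ := omitPair_ne_succ i
  have h₃ : i.castSucc ≠ i.succ := Fin.castSucc_lt_succ.ne
  rcases omitPair_cases i j with rfl | rfl | ⟨t, rfl⟩
  · simp [insertArcFun_castSucc, h₃, h₁, eq_comm (b := i.succ)]
  · simp [insertArcFun_succ, h₃.symm, h₂, eq_comm (b := i.castSucc)]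
  · simp only [insertArcFun_omitPair, Option.map_eq_some_iff, (omitPair i).injective.eq_iff,
      h₁, h₂, false_and, false_or]
    constructor
    · rintro ⟨t', ht', rfl⟩
      exact ⟨t, t', ht', rfl, rfl⟩
    · rintro ⟨_, t', ht', rfl, rfl⟩
      exact ⟨t', ht', rfl⟩

theorem eraseArcFun_eq_some_iff (N : Fin (m + 2) → Option (Fin (m + 2))) {t t' : Fin m} :
    eraseArcFun i N t = some t' ↔ N (omitPair i t) = some (omitPair i t') := by
  rw [eraseArcFun, Option.bind_eq_some_iff]
  simp [(omitPair i).injective.isPartialInv _ _]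

end ArcSurgery

namespace Config

variable {n m : ℕ} {r : Fin (m + 2) → ℤ} {i : Fin (m + 1)}

theorem isConfig_insertArcFun
    (hstep : r i.succ = r i.castSucc + 1 ∨ r i.succ = r i.castSucc - 1)
    (c : Config (r ∘ omitPair i)) : IsConfig r (insertArcFun i c.1) := by
  obtain ⟨hsymm, hirr, hcross, hstep', hint⟩ := c.2
  have harc {a b} := insertArcFun_eq_some_iff (i := i) c.1 (j := a) (l := b)
  refine ⟨?_, ?_, ?_, ?_, ?_⟩
  · intro a b h
    rcases harc.1 h with ⟨rfl, rfl⟩ | ⟨rfl, rfl⟩ | ⟨t, t', hct, rfl, rfl⟩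
    · exact insertArcFun_succ c.1
    · exact insertArcFun_castSucc c.1
    · rw [insertArcFun_omitPair, hsymm t t' hct, Option.map_some]
  · intro a h
    rcases harc.1 h with ⟨rfl, h⟩ | ⟨rfl, h⟩ | ⟨t, t', hct, rfl, h'⟩
    · exact Fin.castSucc_lt_succ.ne h
    · exact Fin.castSucc_lt_succ.ne' h
    · exact hirr t ((omitPair i).injective h' ▸ hct)
  · intro a b l l' hab hll' h₁ h₂
    rcases harc.1 hab with ⟨rfl, rfl⟩ | ⟨rfl, rfl⟩ | ⟨ta, tb, hct, rfl, rfl⟩ <;>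
      rcases harc.1 hll' with ⟨rfl, rfl⟩ | ⟨rfl, rfl⟩ | ⟨tl, tl', hct', rfl, rfl⟩
    all_goals first
      | simp only [(omitPair i).lt_iff_lt] at h₁ h₂ ⊢; exact hcross ta tb tl tl' hct hct' h₁ h₂
      | simp only [Fin.lt_def, Fin.val_castSucc, Fin.val_succ] at h₁ h₂ ⊢
        try have := val_omitPair_lt_or_gt i ta
        try have := val_omitPair_lt_or_gt i tb
        try have := val_omitPair_lt_or_gt i tl
        omega
  · intro a b h
    rcases harc.1 h with ⟨rfl, rfl⟩ | ⟨rfl, rfl⟩ | ⟨t, t', hct, rfl, rfl⟩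
    · exact hstep
    · omega
    · exact hstep' t t' hct
  · intro a b h l h₁ h₂
    rcases harc.1 h with ⟨rfl, rfl⟩ | ⟨rfl, rfl⟩ | ⟨ta, tb, hct, rfl, rfl⟩
    any_goals simp only [Fin.lt_def, Fin.val_castSucc, Fin.val_succ] at h₁ h₂; omega
    · rcases omitPair_cases i l with rfl | rfl | ⟨tl, rfl⟩
      · simp [insertArcFun_castSucc]
      · simp [insertArcFun_succ]
      · rw [(omitPair i).lt_iff_lt] at h₁ h₂
        simpa [insertArcFun_omitPair] using hint ta tb hct tl h₁ h₂

variable (i) in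
noncomputable def insertArc
    (hstep : r i.succ = r i.castSucc + 1 ∨ r i.succ = r i.castSucc - 1)
    (c : Config (r ∘ omitPair i)) : Config r :=
  ⟨insertArcFun i c.1, isConfig_insertArcFun hstep c⟩

variable {hstep : r i.succ = r i.castSucc + 1 ∨ r i.succ = r i.castSucc - 1}
  {c : Config (r ∘ omitPair i)}

theorem coe_freePos_insertArc :
    (freePos (insertArc i hstep c) : Set (Fin (m + 2))) = omitPair i '' freePos c := by
  ext j
  rw [Finset.mem_coe, mem_freePos]
  rcases omitPair_cases i j with rfl | rfl | ⟨t, rfl⟩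
  · simp [insertArc, insertArcFun_castSucc, omitPair_ne_castSucc]
  · simp [insertArc, insertArcFun_succ, omitPair_ne_succ]
  · simp [insertArc, insertArcFun_omitPair, (omitPair i).injective.mem_set_image, mem_freePos]

theorem isCompatible_insertArc_iff {ns : Fin (m + 2) → Fin n} :
    (insertArc i hstep c).IsCompatible ns ↔
      IsViolation n r ns i.castSucc i.succ ∧ c.IsCompatible (ns ∘ omitPair i) := by
  rw [IsCompatible, IsCompatible, coe_freePos_insertArc, admissibleOn_image_iff, ← and_assoc]
  refine and_congr_left' ⟨fun h => ⟨?_, fun t t' hct htt' => ?_⟩, ?_⟩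
  · exact h _ _ (insertArcFun_castSucc c.1) Fin.castSucc_lt_succ
  · exact h _ _ (by simp [insertArc, insertArcFun_omitPair, hct]) ((omitPair i).lt_iff_lt.2 htt')
  · rintro ⟨hv, h⟩ a b hab hlt
    rcases (insertArcFun_eq_some_iff c.1).1 hab with ⟨rfl, rfl⟩ | ⟨rfl, rfl⟩ |
      ⟨t, t', hct, rfl, rfl⟩
    · exact hv
    · exact absurd hlt Fin.castSucc_lt_succ.not_gt
    · exact h t t' hct ((omitPair i).lt_iff_lt.1 hlt)

section Erase

variable (c : Config r)

theorem exists_omitPair_eq_of_arc (hp : c.1 i.castSucc = some i.succ) {t : Fin m}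
    {l : Fin (m + 2)} (h : c.1 (omitPair i t) = some l) : ∃ t', omitPair i t' = l := by
  rcases omitPair_cases i l with rfl | rfl | ht'
  · exact absurd (Option.some.inj (hp.symm.trans (c.symm h))) (omitPair_ne_succ i t).symm
  · exact absurd (Option.some.inj ((c.symm hp).symm.trans (c.symm h)))
      (omitPair_ne_castSucc i t).symm
  · exact ht'

theorem isConfig_eraseArcFun (hp : c.1 i.castSucc = some i.succ) :
    IsConfig (r ∘ omitPair i) (eraseArcFun i c.1) := by
  simp only [IsConfig, ne_eq, eraseArcFun_eq_some_iff, ← (omitPair i).lt_iff_lt,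
    Function.comp_apply]
  refine ⟨fun a b h => c.symm h, fun a h => c.ne h rfl, fun a b l l' => c.2.2.2.1 _ _ _ _,
    fun a b => c.step, fun a b h l h₁ h₂ => ?_⟩
  obtain ⟨l', hl', -⟩ := c.exists_nested h h₁ h₂
  obtain ⟨t', rfl⟩ := c.exists_omitPair_eq_of_arc hp hl'
  simp [eraseArcFun, hl', Function.partialInv_left (omitPair i).injective]

theorem insertArcFun_eraseArcFun (hp : c.1 i.castSucc = some i.succ) :
    insertArcFun i (eraseArcFun i c.1) = c.1 := by
  funext j
  rcases omitPair_cases i j with rfl | rfl | ⟨t, rfl⟩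
  · rw [insertArcFun_castSucc, hp]
  · rw [insertArcFun_succ, c.symm hp]
  · rw [insertArcFun_omitPair]
    cases hct : c.1 (omitPair i t) with
    | none => simp [eraseArcFun, hct]
    | some l =>
      obtain ⟨t', rfl⟩ := c.exists_omitPair_eq_of_arc hp hct
      simp [eraseArcFun, hct, Function.partialInv_left (omitPair i).injective]

theorem exists_insertArc_eq (hp : c.1 i.castSucc = some i.succ) :
    ∃ c' hstep, insertArc i hstep c' = c :=
  ⟨⟨eraseArcFun i c.1, c.isConfig_eraseArcFun hp⟩, c.step hp,
    Subtype.ext (c.insertArcFun_eraseArcFun hp)⟩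

end Erase

end Config

namespace Config

variable {n : ℕ}

theorem existsUnique_isCompatible_of_isViolation (hn : 2 ≤ n) {m : ℕ} {r : Fin (m + 2) → ℤ}
    {ns : Fin (m + 2) → Fin n} {i : Fin (m + 1)} (hv : IsViolation n r ns i.castSucc i.succ)
    (ih : ∃! c' : Config (r ∘ omitPair i), c'.IsCompatible (ns ∘ omitPair i)) :
    ∃! c : Config r, c.IsCompatible ns := by
  obtain ⟨c', hc', huniq⟩ := ih
  refine ⟨insertArc i hv.1 c', isCompatible_insertArc_iff.2 ⟨hv, hc'⟩, fun c hc => ?_⟩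
  obtain ⟨c'', _, rfl⟩ := c.exists_insertArc_eq (hc.arc_of_isViolation hn rfl hv)
  rw [huniq c'' (isCompatible_insertArc_iff.1 hc).2]

theorem existsUnique_isCompatible (hn : 2 ≤ n) {k : ℕ} (r : Fin k → ℤ) (ns : Fin k → Fin n) :
    ∃! c : Config r, c.IsCompatible ns := by
  induction k using Nat.strong_induction_on with
  | _ k ih =>
    by_cases hadm : admissible n r ns
    · exact existsUnique_isCompatible_of_admissible hadm
    · simp only [admissible, admissibleAt_iff, not_forall, not_not] at hadm
      obtain ⟨i, hi, hv⟩ := hadm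
      obtain ⟨m, rfl⟩ : ∃ m, k = m + 2 := ⟨k - 2, by omega⟩
      exact existsUnique_isCompatible_of_isViolation hn (i := ⟨i, by omega⟩) hv
        (ih m (by omega) _ _)

end Config

/-- the counting identity `n^k = Σ_{c ∈ Conf_r} n_{r_c}`. -/
theorem count_identity (n : ℕ) (hn : 2 ≤ n) (k : ℕ) (r : Fin k → ℤ) :
    n ^ k = ∑ᶠ c : Config r, nCount n (reducedVec c) := by
  classical
  calc n ^ k = Nat.card (Fin k → Fin n) := by simp
    _ = ∑ c : Config r, Nat.card {ns : Fin k → Fin n // c.IsCompatible ns} :=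
      Nat.card_eq_sum_card_of_existsUnique _ (Config.existsUnique_isCompatible hn r)
    _ = ∑ᶠ c : Config r, nCount n (reducedVec c) := by
      simp only [Config.card_isCompatible _ (by omega : 0 < n), finsum_eq_sum_of_fintype]
end

section
/- Transitivity of configurations: let r be an integer vector and c an r-configuration in which position i holds '(' matched with ')' at position i+1. Let d be the r-configuration consisting only of that pair at positions i, i+1, and let d' be the r_d-configuration consisting of all remaining symbols of c (after deleting positions i, i+1). Then d' is a valid r_d-configuration and r_c = (r_d)_{d'}. -/
/-! The argument works for any sub-configuration `d` of `c`, i.e. any `d` whose pairs are pairs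
of `c`. A position left free by `d` can only be matched by `c` to another such position (its
partner would otherwise be matched by `d` to it, by symmetry of both matchings), so `c` restricts,
along the increasing enumeration of the `d`-free positions, to an `r_d`-configuration `d'`. A
position is free for `d'` exactly when its image is free for `c`; hence the increasing enumeration
of the `c`-free positions factors through that of the `d`-free ones, which is `r_c = (r_d)_{d'}`. -/

theorem Finset.orderEmbOfFin_map {α β : Type*} [LinearOrder α] [LinearOrder β] (f : α ↪o β)
    (s : Finset α) {m : ℕ} (h : (s.map f.toEmbedding).card = m) (t : Fin m) :
    (s.map f.toEmbedding).orderEmbOfFin h t =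
      f (s.orderEmbOfFin ((Finset.card_map _).symm.trans h) t) := by
  rw [← Finset.orderEmbOfFin_unique' h
    (f := (s.orderEmbOfFin ((Finset.card_map _).symm.trans h)).trans f) fun _ => by simp]
  rfl

section

variable {k : ℕ} {r : Fin k → ℤ}

@[simp]
lemma mem_freePos {c : Config r} {l : Fin k} : l ∈ freePos c ↔ c.1 l = none := by
  simp [freePos]

def freeEmb (c : Config r) : Fin (reducedLen c) ↪o Fin k :=
  (freePos c).orderEmbOfFin rfl

lemma freeEmb_mem (c : Config r) (t : Fin (reducedLen c)) : freeEmb c t ∈ freePos c :=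
  Finset.orderEmbOfFin_mem _ _ t

lemma range_freeEmb (c : Config r) : Set.range (freeEmb c) = freePos c :=
  Finset.range_orderEmbOfFin _ _

lemma reducedVec_apply (c : Config r) (t : Fin (reducedLen c)) :
    reducedVec c t = r (freeEmb c t) :=
  rfl

def restrictMatching (c d : Config r) : Fin (reducedLen d) → Option (Fin (reducedLen d)) :=
  fun t => (c.1 ((freePos d).orderIsoOfFin rfl t).1).bind fun j =>
    if hj : j ∈ freePos d then some (((freePos d).orderIsoOfFin rfl).symm ⟨j, hj⟩) else none

lemma restrictMatching_eq_some {c d : Config r} {t u : Fin (reducedLen d)} :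
    restrictMatching c d t = some u ↔ c.1 (freeEmb d t) = some (freeEmb d u) := by
  simp only [restrictMatching, Option.bind_eq_some_iff]
  constructor
  · rintro ⟨j, hj, hju⟩
    split_ifs at hju with hjd
    cases hju
    exact hj.trans (congrArg (fun x : freePos d => some x.1)
      (((freePos d).orderIsoOfFin rfl).apply_symm_apply ⟨j, hjd⟩)).symm
  · intro h
    refine ⟨_, h, ?_⟩
    exact (dif_pos ((freePos d).orderIsoOfFin rfl u).2).trans
      (congrArg some (OrderIso.symm_apply_apply _ u))

def IsSubConfig (d c : Config r) : Prop :=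
  ∀ l m, d.1 l = some m → c.1 l = some m

namespace IsSubConfig

variable {c d : Config r}

lemma freePos_subset (h : IsSubConfig d c) : freePos c ⊆ freePos d := by
  intro l hl
  rw [mem_freePos] at hl ⊢
  cases hdl : d.1 l with
  | none => rfl
  | some m => simp [h l m hdl] at hl

lemma partner_mem_freePos (h : IsSubConfig d c) {l m : Fin k} (hl : l ∈ freePos d)
    (hlm : c.1 l = some m) : m ∈ freePos d := by
  rw [mem_freePos] at hl ⊢
  cases hdm : d.1 m with
  | none => rfl
  | some p =>
    obtain rfl : p = l := Option.some_injective _ ((h m p hdm).symm.trans (c.2.1 _ _ hlm))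
    simp [d.2.1 _ _ hdm] at hl

lemma restrictMatching_eq_none (h : IsSubConfig d c) {t : Fin (reducedLen d)} :
    restrictMatching c d t = none ↔ c.1 (freeEmb d t) = none := by
  simp only [restrictMatching, Option.bind_eq_none_iff]
  constructor
  · intro hnone
    by_contra hc
    obtain ⟨j, hj⟩ := Option.ne_none_iff_exists'.mp hc
    simpa [h.partner_mem_freePos (freeEmb_mem d t) hj] using hnone j hj
  · intro hnone j hj
    exact absurd (hj.symm.trans hnone) (Option.some_ne_none j)

lemma isConfig_restrictMatching (h : IsSubConfig d c) :
    IsConfig (reducedVec d) (restrictMatching c d) := by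
  have e_lt {t u : Fin (reducedLen d)} : t < u ↔ freeEmb d t < freeEmb d u :=
    (freeEmb d).lt_iff_lt.symm
  obtain ⟨hsymm, hirrefl, hnest, hstep, hfilled⟩ := c.2
  refine ⟨fun t u htu => ?_, fun t htt => ?_, fun t u l m htu hlm htl hlu => ?_,
    fun t u htu => ?_, fun t u htu l htl hlu => ?_⟩ <;>
    simp only [restrictMatching_eq_some] at *
  · exact hsymm _ _ htu
  · exact hirrefl _ htt
  · simpa only [e_lt] using hnest _ _ _ _ htu hlm (e_lt.1 htl) (e_lt.1 hlu)
  · exact hstep _ _ htu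
  · rw [Option.isSome_iff_ne_none, Ne, h.restrictMatching_eq_none, ← Ne,
      ← Option.isSome_iff_ne_none]
    exact hfilled _ _ htu _ (e_lt.1 htl) (e_lt.1 hlu)

def restrict (h : IsSubConfig d c) : Config (reducedVec d) :=
  ⟨restrictMatching c d, h.isConfig_restrictMatching⟩

lemma freePos_eq_map (h : IsSubConfig d c) :
    freePos c = (freePos h.restrict).map (freeEmb d).toEmbedding := by
  ext l
  simp only [Finset.mem_map, mem_freePos, RelEmbedding.coe_toEmbedding]
  constructor
  · intro hl
    obtain ⟨t, rfl⟩ : l ∈ Set.range (freeEmb d) := by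
      rw [range_freeEmb]
      exact h.freePos_subset (mem_freePos.2 hl)
    exact ⟨t, h.restrictMatching_eq_none.2 hl, rfl⟩
  · rintro ⟨t, ht, rfl⟩
    exact h.restrictMatching_eq_none.1 ht

theorem reducedVec_restrict (h : IsSubConfig d c) :
    reducedLen c = reducedLen h.restrict ∧
      ∀ (t : Fin (reducedLen c)) (t' : Fin (reducedLen h.restrict)),
        (t : ℕ) = t' → reducedVec c t = reducedVec h.restrict t' := by
  have hcard : (freePos c).card = reducedLen h.restrict := by
    rw [h.freePos_eq_map, Finset.card_map]
    rfl
  refine ⟨hcard, fun t t' htt' => ?_⟩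
  have hmap : ∀ (s : Finset (Fin k)) (hs : s.card = reducedLen h.restrict),
      s = (freePos h.restrict).map (freeEmb d).toEmbedding →
      s.orderEmbOfFin hs t' = freeEmb d (freeEmb h.restrict t') := by
    rintro _ hs rfl
    exact Finset.orderEmbOfFin_map _ _ _ _
  have ht : freeEmb c t = (freePos c).orderEmbOfFin hcard t' :=
    Finset.orderEmbOfFin_eq_orderEmbOfFin_iff.2 htt'
  rw [reducedVec_apply, reducedVec_apply, reducedVec_apply, ht, hmap _ hcard h.freePos_eq_map]

end IsSubConfig

def pairMatching (i j : Fin k) : Fin k → Option (Fin k) :=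
  fun l => if l = i then some j else if l = j then some i else none

lemma pairMatching_eq_some {i j l m : Fin k} (hij : i ≠ j) :
    pairMatching i j l = some m ↔ l = i ∧ m = j ∨ l = j ∧ m = i := by
  by_cases hli : l = i
  · subst hli
    simp [pairMatching, hij, eq_comm]
  · by_cases hlj : l = j
    · subst hlj
      simp [pairMatching, hli, eq_comm]
    · simp [pairMatching, hli, hlj]

lemma isConfig_pairMatching {i j : Fin k} (hij : (j : ℕ) = i + 1)
    (hr : r j = r i + 1 ∨ r j = r i - 1) : IsConfig r (pairMatching i j) := by
  have hne : i ≠ j := fun h => by simp [h] at hij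
  have no_between {l m l' : Fin k} (hlm : pairMatching i j l = some m) (hl : l < l')
      (hl' : l' < m) : False := by
    rcases (pairMatching_eq_some hne).1 hlm with ⟨rfl, rfl⟩ | ⟨rfl, rfl⟩ <;>
      simp only [Fin.lt_def] at hl hl' <;> omega
  refine ⟨fun l m hlm => ?_, fun l hl => ?_, fun l m _ _ hlm _ hl hl' => ?_,
    fun l m hlm => ?_, fun l m hlm l' hl hl' => ?_⟩
  · rw [pairMatching_eq_some hne] at hlm ⊢
    tauto
  · rcases (pairMatching_eq_some hne).1 hl with ⟨rfl, h⟩ | ⟨rfl, h⟩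
    exacts [hne h, hne h.symm]
  · exact (no_between hlm hl hl').elim
  · rcases (pairMatching_eq_some hne).1 hlm with ⟨rfl, rfl⟩ | ⟨rfl, rfl⟩ <;> omega
  · exact (no_between hlm hl hl').elim

lemma isSubConfig_pairMatching {c : Config r} {i j : Fin k} (hd : IsConfig r (pairMatching i j))
    (hpair : c.1 i = some j) : IsSubConfig ⟨_, hd⟩ c := by
  have hne : i ≠ j := fun h => c.2.2.1 i (h ▸ hpair)
  intro l m hlm
  rcases (pairMatching_eq_some hne).1 hlm with ⟨rfl, rfl⟩ | ⟨rfl, rfl⟩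
  · exact hpair
  · exact c.2.1 _ _ hpair

end

/-- transitivity of configurations: if in an `r`-configuration `c`
position `i` holds `'('` matched with `')'` at position `i+1`, let `d` be the
`r`-configuration consisting only of that pair, and let `d'` be the assignment on the
positions of `r_d` given by the remaining symbols of `c`. Then `d` and `d'` are valid
configurations and `r_c = (r_d)_{d'}`. -/
theorem config_transitivity {k : ℕ} (r : Fin k → ℤ) (c : Config r)
    (i : Fin k) (hi : (i : ℕ) + 1 < k)
    (hpair : c.1 i = some ⟨(i : ℕ) + 1, hi⟩) :
    ∃ hd : IsConfig r (fun l =>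
        if l = i then some ⟨(i : ℕ) + 1, hi⟩
        else if l = ⟨(i : ℕ) + 1, hi⟩ then some i else none),
      let d : Config r := ⟨_, hd⟩
      ∃ hd' : IsConfig (reducedVec d) (fun t =>
          (c.1 (((freePos d).orderIsoOfFin rfl t).1)).bind fun j =>
            if hj : j ∈ freePos d then
              some (((freePos d).orderIsoOfFin rfl).symm ⟨j, hj⟩) else none),
        let d' : Config (reducedVec d) := ⟨_, hd'⟩
        reducedLen c = reducedLen d' ∧
        ∀ (t : Fin (reducedLen c)) (t' : Fin (reducedLen d')),
          (t : ℕ) = (t' : ℕ) → reducedVec c t = reducedVec d' t' := by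
  have hd : IsConfig r (pairMatching i ⟨(i : ℕ) + 1, hi⟩) :=
    isConfig_pairMatching rfl (c.2.2.2.2.1 _ _ hpair)
  have hdc := isSubConfig_pairMatching hd hpair
  exact ⟨hd, hdc.isConfig_restrictMatching, hdc.reducedVec_restrict⟩
end
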